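/- Let s ∈ (0,4) and Ψ : ℕ → (0,∞) be such that ∑_{m=1}^∞ m⁷·Ψ(m)^s < ∞. Then the set 𝒱(Ψ) of ξ in the closed fundamental domain Δ̄ with |ξ − p·q⁻¹|₂ < Ψ(⌊|q|₂⌋) for infinitely many Hurwitz integer pairs (p,q), q ≠ 0, has Hausdorff s-measure zero. -/

import Mathlib

open MeasureTheory Metric Filter Set Quaternion

noncomputable instance : MeasurableSpace (Quaternion ℝ) := borel _
instance : BorelSpace (Quaternion ℝ) := ⟨rfl⟩

/-- Lebesgue measure on the quaternions, transported from `ℝ⁴`. -/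
noncomputable instance : MeasureSpace (Quaternion ℝ) :=
  ⟨Measure.map (Quaternion.equivTuple ℝ).symm volume⟩

/-- A quaternion is a Hurwitz integer if all its coordinates are integers or
all its coordinates are in `ℤ + 1/2`. -/
def IsHurwitz (x : Quaternion ℝ) : Prop :=
  (∃ a b c d : ℤ, x.re = a ∧ x.imI = b ∧ x.imJ = c ∧ x.imK = d) ∨
  (∃ a b c d : ℤ, x.re = a + 1/2 ∧ x.imI = b + 1/2 ∧ x.imJ = c + 1/2 ∧ x.imK = d + 1/2)

/-- The fundamental domain `Δ = [0,1)³ × [0,1/2)` for Hurwitz translations. -/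
def fundDom : Set (Quaternion ℝ) :=
  {x | 0 ≤ x.re ∧ x.re < 1 ∧ 0 ≤ x.imI ∧ x.imI < 1 ∧ 0 ≤ x.imJ ∧ x.imJ < 1 ∧
    0 ≤ x.imK ∧ x.imK < 1/2}

/-- The closed fundamental domain `Δ̄ = [0,1]³ × [0,1/2]`. -/
def fundDomCl : Set (Quaternion ℝ) :=
  {x | 0 ≤ x.re ∧ x.re ≤ 1 ∧ 0 ≤ x.imI ∧ x.imI ≤ 1 ∧ 0 ≤ x.imJ ∧ x.imJ ≤ 1 ∧
    0 ≤ x.imK ∧ x.imK ≤ 1/2}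

/-- The set of `Ψ`-approximable quaternions in the closed fundamental domain. -/
def VSet (Ψ : ℕ → ℝ) : Set (Quaternion ℝ) :=
  {ξ | ξ ∈ fundDomCl ∧ {pq : Quaternion ℝ × Quaternion ℝ | IsHurwitz pq.1 ∧ IsHurwitz pq.2 ∧
    pq.2 ≠ 0 ∧ ‖ξ - pq.1 * pq.2⁻¹‖ < Ψ ⌊‖pq.2‖⌋₊}.Infinite}

open scoped ENNReal Topology

/-!
Distinct Hurwitz integers are at distance at least `1`, so comparing volumes of disjoint balls of
radius `1/2` bounds the number of Hurwitz pairs `(p, q)` with `⌊‖q‖⌋₊ = m` and `‖p * q⁻¹‖ ≤ R` by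
`O(m⁴) · O(m³) = O(m⁷)`. As `Ψ → 0`, `Ψ` is bounded, so every point of `VSet Ψ` lies in infinitely
many balls `B(p * q⁻¹, Ψ ⌊‖q‖⌋₊)` with `(p, q)` of this kind for a fixed `R`, and the sum of the
`s`-th powers of their diameters is `≪ ∑ m⁷ Ψ(m)^s < ∞`. The Hausdorff–Cantelli lemma (the first
Borel–Cantelli argument, run on covers whose diameters tend to `0`) gives `μH[s] (VSet Ψ) = 0`.
-/

theorem hausdorffMeasure_limsup_cofinite_eq_zero {X ι : Type*} [EMetricSpace X]
    [MeasurableSpace X] [BorelSpace X] [Countable ι] {d : ℝ} (hd : 0 < d) {t : ι → Set X}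
    (ht : ∑' i, ediam (t i) ^ d ≠ ∞) : μH[d] (limsup t cofinite) = 0 := by
  have htail := ENNReal.tendsto_tsum_compl_atTop_zero ht
  have hr : Tendsto (fun F : Finset ι => (∑' i : {i // i ∉ F}, ediam (t i) ^ d) ^ d⁻¹)
      atTop (𝓝 0) := by
    have := (ENNReal.continuous_rpow_const (y := d⁻¹)).tendsto 0 |>.comp htail
    rwa [ENNReal.zero_rpow_of_pos (inv_pos.2 hd)] at this
  refine le_antisymm ?_ zero_le
  calc μH[d] (limsup t cofinite)
      ≤ liminf (fun F : Finset ι => ∑' i : {i // i ∉ F}, ediam (t i) ^ d) atTop := by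
        refine Measure.hausdorffMeasure_le_liminf_tsum d _ _ hr
          (ι := fun F : Finset ι => {i // i ∉ F}) (fun _ i => t i)
          (.of_forall fun F i => ?_) (.of_forall fun F => ?_)
        · calc ediam (t i) = (ediam (t i) ^ d) ^ d⁻¹ := (ENNReal.rpow_rpow_inv hd.ne' _).symm
            _ ≤ _ := ENNReal.rpow_le_rpow (ENNReal.le_tsum i) (inv_nonneg.2 hd.le)
        · rw [hasBasis_cofinite.limsup_eq_iInf_iSup, iUnion_subtype]
          exact iInter₂_subset _ F.finite_toSet
    _ = 0 := htail.liminf_eq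

lemma encard_mul_le_measure_of_pairwiseDisjoint {α X : Type*} [MeasurableSpace X]
    (μ : Measure X) {S : Set α} {B : α → Set X} {W : Set X} {v : ℝ≥0∞}
    (hB : ∀ x ∈ S, MeasurableSet (B x)) (hdisj : S.PairwiseDisjoint B)
    (hW : ∀ x ∈ S, B x ⊆ W) (hv : ∀ x ∈ S, v ≤ μ (B x)) : S.encard * v ≤ μ W :=
  calc (S.encard : ℝ≥0∞) * v = ∑' _ : S, v := (ENNReal.tsum_set_const S v).symm
    _ ≤ ∑' x : S, μ (B x) := ENNReal.tsum_le_tsum fun x => hv x x.2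
    _ ≤ μ (⋃ x : S, B x) := tsum_meas_le_meas_iUnion_of_disjoint μ (fun x => hB x x.2)
          fun x y hxy => hdisj x.2 y.2 (Subtype.coe_ne_coe.2 hxy)
    _ ≤ μ W := measure_mono (iUnion_subset fun x => hW x x.2)

lemma ediam_ball_rpow_le {X : Type*} [PseudoMetricSpace X] (x : X) {r s : ℝ} (hr : 0 ≤ r)
    (hs : 0 ≤ s) : ediam (ball x r) ^ s ≤ ENNReal.ofReal ((2 * r) ^ s) := by
  rw [← Metric.eball_ofReal, ← ENNReal.ofReal_rpow_of_nonneg (by positivity) hs,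
    ENNReal.ofReal_mul zero_le_two, ENNReal.ofReal_ofNat]
  exact ENNReal.rpow_le_rpow ediam_eball_le hs

lemma tendsto_zero_of_summable_pow_mul_rpow {Ψ : ℕ → ℝ} (hΨ : ∀ m, 0 ≤ Ψ m) {s : ℝ}
    (hs : 0 < s) {k : ℕ} (h : Summable fun m : ℕ => (m : ℝ) ^ k * Ψ m ^ s) :
    Tendsto Ψ atTop (𝓝 0) := by
  have hpow : Tendsto (fun m => Ψ m ^ s) atTop (𝓝 0) := by
    refine squeeze_zero' (.of_forall fun m => Real.rpow_nonneg (hΨ m) s) ?_ h.tendsto_atTop_zero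
    filter_upwards [eventually_ge_atTop 1] with m hm
    exact le_mul_of_one_le_left (Real.rpow_nonneg (hΨ m) s) (one_le_pow₀ (by exact_mod_cast hm))
  have := (Real.continuousAt_rpow_const 0 s⁻¹ (.inr (inv_pos.2 hs).le)).tendsto.comp hpow
  simpa [Function.comp_def, Real.rpow_rpow_inv (hΨ _) hs.ne', Real.zero_rpow (inv_ne_zero hs.ne')]
    using this

instance : (volume : Measure ℍ).IsAddHaarMeasure := by
  let e : ℍ ≃ₗ[ℝ] (Fin 4 → ℝ) := QuaternionAlgebra.linearEquivTuple _ _ _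
  exact Measure.MapLinearEquiv.isAddHaarMeasure volume e.symm

lemma Quaternion.norm_sq_eq (a : ℍ) : ‖a‖ ^ 2 = a.re ^ 2 + a.imI ^ 2 + a.imJ ^ 2 + a.imK ^ 2 := by
  rw [sq, ← normSq_eq_norm_mul_self, normSq_def']

lemma IsHurwitz.sub {x y : ℍ} (hx : IsHurwitz x) (hy : IsHurwitz y) : IsHurwitz (x - y) := by
  rcases hx with ⟨a, b, c, d, ha, hb, hc, hd⟩ | ⟨a, b, c, d, ha, hb, hc, hd⟩ <;>
    rcases hy with ⟨a', b', c', d', ha', hb', hc', hd'⟩ | ⟨a', b', c', d', ha', hb', hc', hd'⟩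
  · exact .inl ⟨a - a', b - b', c - c', d - d', by simp [*]⟩
  · exact .inr ⟨a - a' - 1, b - b' - 1, c - c' - 1, d - d' - 1, by simp [*]; ring_nf; simp⟩
  · exact .inr ⟨a - a', b - b', c - c', d - d', by simp [*]; ring_nf; simp⟩
  · exact .inl ⟨a - a', b - b', c - c', d - d', by simp [*]⟩

lemma IsHurwitz.one_le_norm {x : ℍ} (hx : IsHurwitz x) (h0 : x ≠ 0) : 1 ≤ ‖x‖ := by
  suffices 1 ≤ ‖x‖ ^ 2 by nlinarith [norm_nonneg x]
  rw [norm_sq_eq]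
  rcases hx with ⟨a, b, c, d, ha, hb, hc, hd⟩ | ⟨a, b, c, d, ha, hb, hc, hd⟩ <;>
    rw [ha, hb, hc, hd]
  · have hne : a ≠ 0 ∨ b ≠ 0 ∨ c ≠ 0 ∨ d ≠ 0 := by
      by_contra! h
      exact h0 (by ext <;> simp_all)
    have : (1 : ℤ) ≤ a ^ 2 + b ^ 2 + c ^ 2 + d ^ 2 := by
      rcases hne with h | h | h | h <;>
        linarith [sq_pos_of_ne_zero h, sq_nonneg a, sq_nonneg b, sq_nonneg c, sq_nonneg d]
    exact_mod_cast this
  · have quarter_le (n : ℤ) : (1 / 4 : ℝ) ≤ (n + 1 / 2) ^ 2 := by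
      have : (0 : ℤ) ≤ n ^ 2 + n := by rcases le_or_gt 0 n with h | h <;> nlinarith
      have : (0 : ℝ) ≤ n ^ 2 + n := by exact_mod_cast this
      linarith
    linarith [quarter_le a, quarter_le b, quarter_le c, quarter_le d]

lemma encard_mul_volume_ball_le_of_isHurwitz {S W : Set ℍ} (hS : ∀ x ∈ S, IsHurwitz x)
    (hW : ∀ x ∈ S, ball x 2⁻¹ ⊆ W) : S.encard * volume (ball (0 : ℍ) 2⁻¹) ≤ volume W := by
  refine encard_mul_le_measure_of_pairwiseDisjoint volume (fun _ _ => measurableSet_ball)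
    (fun x hx y hy hxy => ball_disjoint_ball ?_) hW
    fun x _ => (Measure.addHaar_ball_center volume x 2⁻¹).ge
  rw [dist_eq_norm]
  linarith [((hS x hx).sub (hS y hy)).one_le_norm (sub_ne_zero.2 hxy)]

lemma volume_closedBall_zero_mul_inv_two {c : ℝ} (hc : 0 ≤ c) :
    volume (closedBall (0 : ℍ) (c * 2⁻¹)) =
      ENNReal.ofReal (c ^ 4) * volume (ball (0 : ℍ) 2⁻¹) := by
  rw [Measure.addHaar_closedBall_mul _ _ hc (by norm_num),
    Measure.addHaar_closedBall_eq_addHaar_ball, finrank_eq_four]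

lemma volume_ball_zero_mul_inv_two {c : ℝ} (hc : 0 ≤ c) :
    volume (ball (0 : ℍ) (c * 2⁻¹)) = ENNReal.ofReal (c ^ 4) * volume (ball (0 : ℍ) 2⁻¹) := by
  rw [Measure.addHaar_ball_mul _ _ hc, finrank_eq_four]

lemma encard_le_of_mul_volume_ball_le {S : Set ℍ} {a : ℝ≥0∞}
    (h : S.encard * volume (ball (0 : ℍ) 2⁻¹) ≤ a * volume (ball (0 : ℍ) 2⁻¹)) :
    (S.encard : ℝ≥0∞) ≤ a :=
  (ENNReal.mul_le_mul_iff_left (measure_ball_pos _ _ (by norm_num)).ne'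
    measure_ball_lt_top.ne).1 h

lemma encard_isHurwitz_norm_le {r : ℝ} (hr : 0 ≤ r) :
    ({x : ℍ | IsHurwitz x ∧ ‖x‖ ≤ r}.encard : ℝ≥0∞) ≤ ENNReal.ofReal ((2 * r + 1) ^ 4) := by
  refine encard_le_of_mul_volume_ball_le ?_
  rw [← volume_closedBall_zero_mul_inv_two (by positivity)]
  refine encard_mul_volume_ball_le_of_isHurwitz (fun x hx => hx.1) fun x hx y hy => ?_
  rw [mem_ball_iff_norm] at hy
  rw [mem_closedBall_zero_iff]
  linarith [norm_sub_norm_le y x, hx.2]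

lemma encard_isHurwitz_floor_norm_eq (m : ℕ) :
    ({x : ℍ | IsHurwitz x ∧ x ≠ 0 ∧ ⌊‖x‖⌋₊ = m}.encard : ℝ≥0∞) ≤
      ENNReal.ofReal (640 * m ^ 3) := by
  rcases Nat.eq_zero_or_pos m with rfl | hm
  · suffices {x : ℍ | IsHurwitz x ∧ x ≠ 0 ∧ ⌊‖x‖⌋₊ = 0} = ∅ by rw [this]; simp
    refine eq_empty_of_forall_notMem fun x ⟨hx, hx0, hfl⟩ => ?_
    have := hx.one_le_norm hx0
    rw [Nat.floor_eq_zero] at hfl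
    linarith
  have hm1 : (1 : ℝ) ≤ m := by exact_mod_cast hm
  refine encard_le_of_mul_volume_ball_le ?_
  calc _ ≤ volume (closedBall (0 : ℍ) ((2 * m + 3) * 2⁻¹) \ ball 0 ((2 * m - 1) * 2⁻¹)) := by
        refine encard_mul_volume_ball_le_of_isHurwitz (fun x hx => hx.1) fun x hx y hy => ?_
        have hlo := Nat.floor_le (norm_nonneg x)
        have hhi := Nat.lt_floor_add_one ‖x‖
        rw [hx.2.2] at hlo hhi
        rw [mem_ball_iff_norm] at hy
        simp only [Set.mem_sdiff, mem_closedBall_zero_iff, mem_ball_zero_iff, not_lt]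
        constructor <;> linarith [norm_sub_norm_le y x, norm_sub_norm_le x y, norm_sub_rev x y]
    _ = ENNReal.ofReal ((2 * m + 3) ^ 4 - (2 * m - 1) ^ 4) * volume (ball (0 : ℍ) 2⁻¹) := by
        rw [measure_sdiff
            (ball_subset_closedBall.trans (closedBall_subset_closedBall (by linarith)))
            measurableSet_ball.nullMeasurableSet measure_ball_lt_top.ne,
          volume_closedBall_zero_mul_inv_two (by positivity),
          volume_ball_zero_mul_inv_two (by linarith),
          ← ENNReal.sub_mul fun _ _ => measure_ball_lt_top.ne,
          ENNReal.ofReal_sub _ (by positivity)]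
    _ ≤ _ := by
        gcongr
        nlinarith [pow_le_pow_left₀ zero_le_one hm1 3, pow_le_pow_left₀ zero_le_one hm1 2]

def approxPairs (R : ℝ) (m : ℕ) : Set (ℍ × ℍ) :=
  {pq | IsHurwitz pq.1 ∧ IsHurwitz pq.2 ∧ pq.2 ≠ 0 ∧ ⌊‖pq.2‖⌋₊ = m ∧ ‖pq.1 * pq.2⁻¹‖ ≤ R}

lemma approxPairs_subset {R : ℝ} (hR : 0 ≤ R) (m : ℕ) :
    approxPairs R m ⊆ {p | IsHurwitz p ∧ ‖p‖ ≤ R * (m + 1)} ×ˢ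
      {q | IsHurwitz q ∧ q ≠ 0 ∧ ⌊‖q‖⌋₊ = m} := by
  rintro ⟨p, q⟩ ⟨hp, hq, hq0, hfl, hpq⟩
  refine ⟨⟨hp, ?_⟩, hq, hq0, hfl⟩
  have hq_lt : ‖q‖ < m + 1 := hfl ▸ Nat.lt_floor_add_one ‖q‖
  calc ‖p‖ = ‖p * q⁻¹‖ * ‖q‖ := by rw [← norm_mul, inv_mul_cancel_right₀ hq0]
    _ ≤ R * (m + 1) := mul_le_mul hpq hq_lt.le (norm_nonneg q) hR

lemma encard_approxPairs_le {R : ℝ} (hR : 0 ≤ R) (m : ℕ) :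
    ((approxPairs R m).encard : ℝ≥0∞) ≤ ENNReal.ofReal (640 * (4 * R + 1) ^ 4 * m ^ 7) := by
  have hm : (0 : ℝ) ≤ m := m.cast_nonneg
  calc ((approxPairs R m).encard : ℝ≥0∞)
      ≤ {p : ℍ | IsHurwitz p ∧ ‖p‖ ≤ R * (m + 1)}.encard *
          {q : ℍ | IsHurwitz q ∧ q ≠ 0 ∧ ⌊‖q‖⌋₊ = m}.encard := by
        rw [← ENat.toENNReal_mul, ← encard_prod]
        exact ENat.toENNReal_le.2 (encard_mono (approxPairs_subset hR m))
    _ ≤ ENNReal.ofReal ((2 * (R * (m + 1)) + 1) ^ 4) * ENNReal.ofReal (640 * m ^ 3) :=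
        mul_le_mul' (encard_isHurwitz_norm_le (by positivity)) (encard_isHurwitz_floor_norm_eq m)
    _ ≤ ENNReal.ofReal (640 * (4 * R + 1) ^ 4 * m ^ 7) := by
        rw [← ENNReal.ofReal_mul (by positivity)]
        refine ENNReal.ofReal_le_ofReal ?_
        rcases Nat.eq_zero_or_pos m with rfl | hm1
        · simp
        have hm1 : (1 : ℝ) ≤ m := by exact_mod_cast hm1
        have hbase : 2 * (R * (m + 1)) + 1 ≤ (4 * R + 1) * m := by nlinarith
        calc (2 * (R * (m + 1)) + 1) ^ 4 * (640 * m ^ 3)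
            ≤ ((4 * R + 1) * m) ^ 4 * (640 * m ^ 3) := by gcongr
          _ = 640 * (4 * R + 1) ^ 4 * m ^ 7 := by ring

lemma countable_iUnion_approxPairs {R : ℝ} (hR : 0 ≤ R) : (⋃ m, approxPairs R m).Countable :=
  countable_iUnion fun m => (encard_ne_top_iff.1 fun h => by
    simpa [h] using encard_approxPairs_le hR m).countable

lemma tsum_approxPairs_le {R : ℝ} (hR : 0 ≤ R) (f : ℕ → ℝ≥0∞) :
    ∑' i : ↥(⋃ m, approxPairs R m), f ⌊‖i.1.2‖⌋₊ ≤
      ∑' m : ℕ, ENNReal.ofReal (640 * (4 * R + 1) ^ 4 * m ^ 7) * f m :=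
  calc ∑' i : ↥(⋃ m, approxPairs R m), f ⌊‖i.1.2‖⌋₊
      ≤ ∑' m, ∑' i : approxPairs R m, f ⌊‖i.1.2‖⌋₊ :=
        ENNReal.tsum_iUnion_le_tsum (fun pq : ℍ × ℍ => f ⌊‖pq.2‖⌋₊) _
    _ = ∑' m, (approxPairs R m).encard * f m := by
        refine tsum_congr fun m => ?_
        rw [← ENNReal.tsum_set_const]
        exact tsum_congr fun i => by rw [i.2.2.2.2.1]
    _ ≤ _ := ENNReal.tsum_le_tsum fun m => mul_le_mul_left (encard_approxPairs_le hR m) _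

lemma norm_le_two_of_mem_fundDomCl {ξ : ℍ} (hξ : ξ ∈ fundDomCl) : ‖ξ‖ ≤ 2 := by
  obtain ⟨h1, h2, h3, h4, h5, h6, h7, h8⟩ := hξ
  nlinarith [norm_sq_eq ξ, norm_nonneg ξ]

lemma vSet_subset_limsup {Ψ : ℕ → ℝ} {B : ℝ} (hB : ∀ m, Ψ m ≤ B) :
    VSet Ψ ⊆ limsup (fun i : ↥(⋃ m, approxPairs (2 + B) m) =>
      ball (i.1.1 * i.1.2⁻¹) (Ψ ⌊‖i.1.2‖⌋₊)) cofinite := by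
  rintro ξ ⟨hξ, hinf⟩
  rw [mem_limsup_iff_frequently_mem, frequently_cofinite_iff_infinite]
  have hsub : {pq : ℍ × ℍ | IsHurwitz pq.1 ∧ IsHurwitz pq.2 ∧ pq.2 ≠ 0 ∧
      ‖ξ - pq.1 * pq.2⁻¹‖ < Ψ ⌊‖pq.2‖⌋₊} ⊆
      range ((↑) : ↥(⋃ m, approxPairs (2 + B) m) → ℍ × ℍ) := by
    rintro ⟨p, q⟩ ⟨hp, hq, hq0, hdist⟩
    refine ⟨⟨(p, q), mem_iUnion.2 ⟨_, hp, hq, hq0, rfl, ?_⟩⟩, rfl⟩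
    linarith [norm_sub_norm_le (p * q⁻¹) ξ, norm_sub_rev ξ (p * q⁻¹),
      norm_le_two_of_mem_fundDomCl hξ, hB ⌊‖q‖⌋₊]
  exact (hinf.preimage hsub).mono fun i hi => mem_ball.2 (by rw [dist_eq_norm]; exact hi.2.2.2)

theorem quaternionic_jarnik_convergence_general (s : ℝ) (hs0 : 0 < s)
    (Ψ : ℕ → ℝ) (hΨ : ∀ m, 0 < Ψ m)
    (hsum : Summable fun m : ℕ => (m : ℝ) ^ 7 * Ψ m ^ s) :
    μH[s] (VSet Ψ) = 0 := by
  obtain ⟨B, hB⟩ :=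
    (tendsto_zero_of_summable_pow_mul_rpow (fun m => (hΨ m).le) hs0 hsum).bddAbove_range
  replace hB : ∀ m, Ψ m ≤ B := fun m => hB ⟨m, rfl⟩
  have hR : 0 ≤ 2 + B := by linarith [hΨ 0, hB 0]
  have := (countable_iUnion_approxPairs hR).to_subtype
  refine measure_mono_null (vSet_subset_limsup hB) (hausdorffMeasure_limsup_cofinite_eq_zero hs0 ?_)
  set C := 640 * (4 * (2 + B) + 1) ^ 4
  have hterm : Summable fun m : ℕ => C * m ^ 7 * (2 * Ψ m) ^ s := by
    refine (hsum.mul_left (C * 2 ^ s)).congr fun m => ?_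
    rw [Real.mul_rpow zero_le_two (hΨ m).le]
    ring
  refine ne_top_of_le_ne_top
    (ENNReal.ofReal_ne_top (r := ∑' m : ℕ, C * m ^ 7 * (2 * Ψ m) ^ s)) ?_
  calc _ ≤ ∑' i : ↥(⋃ m, approxPairs (2 + B) m), ENNReal.ofReal ((2 * Ψ ⌊‖i.1.2‖⌋₊) ^ s) :=
        ENNReal.tsum_le_tsum fun i => ediam_ball_rpow_le _ (hΨ _).le hs0.le
    _ ≤ ∑' m : ℕ, ENNReal.ofReal (C * m ^ 7) * ENNReal.ofReal ((2 * Ψ m) ^ s) :=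
        tsum_approxPairs_le hR _
    _ = ENNReal.ofReal (∑' m : ℕ, C * m ^ 7 * (2 * Ψ m) ^ s) := by
        rw [ENNReal.ofReal_tsum_of_nonneg (fun m => by have := hΨ m; positivity) hterm]
        exact tsum_congr fun m => (ENNReal.ofReal_mul (by positivity)).symm

/-- Convergence part of Jarník's Hausdorff-measure theorem for quaternions,
for `s`-dimensional Hausdorff measure with `0 < s < 4`. -/
theorem quaternionic_jarnik_convergence (s : ℝ) (hs0 : 0 < s) (hs4 : s < 4)
    (Ψ : ℕ → ℝ) (hΨ : ∀ m, 0 < Ψ m)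
    (hsum : Summable fun m : ℕ => (m : ℝ) ^ 7 * Ψ m ^ s) :
    μH[s] (VSet Ψ) = 0 :=
  quaternionic_jarnik_convergence_general s hs0 Ψ hΨ hsum
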